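/- Suppose lim_{x→a⁺} s(x) = ∞, and suppose (w*,y*) with a < w* < y* < b is a maximizing pair of F over 𝓡; set F* = F(w*,y*) and G(x) = F* ξ(x) − γ g(x). Then G is twice continuously differentiable on (a,b) and the pair (G, F*) satisfies the quasi-variational system: (i) (σ(x)²/2) G″(x) + μ(x) G′(x) + γ c(x) − F* = 0 for every x ∈ (a,b); (ii) G(w) + p(y − w) − K − G(y) ≤ 0 for every (w,y) with a < w < y < b; and (iii) G(w*) + p(y* − w*) − K − G(y*) = 0. -/

import Mathlib

open MeasureTheory Filter Set Topology
open scoped Classical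

noncomputable section

/-- The state interval `(a, b)` where `a` is real and `b ∈ (a, ∞]`. -/
def stInt (a : ℝ) (b : EReal) : Set ℝ := {x : ℝ | a < x ∧ (x : EReal) < b}

/-- The filter of approach to the right endpoint `b ∈ (a, ∞]`:
`atTop` when `b = ∞`, and the left-neighborhood filter of `b` otherwise. -/
def atB (b : EReal) : Filter ℝ :=
  if b = ⊤ then Filter.atTop else nhdsWithin b.toReal (Set.Iio b.toReal)

/-- The scale density `s(x) = exp(-∫_{x₀}^x 2μ/σ²)`. -/
def sDen (μ σ : ℝ → ℝ) (x₀ x : ℝ) : ℝ :=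
  Real.exp (-(∫ y in x₀..x, 2 * μ y / (σ y) ^ 2))

/-- The speed density `m(x) = 2/(σ(x)² s(x))`. -/
def mDen (μ σ : ℝ → ℝ) (x₀ x : ℝ) : ℝ :=
  2 / ((σ x) ^ 2 * sDen μ σ x₀ x)

/-- `M[a,x] = ∫_a^x m(u) du`. -/
def Mab (μ σ : ℝ → ℝ) (x₀ a x : ℝ) : ℝ :=
  ∫ u in Set.Ioo a x, mDen μ σ x₀ u

/-- The time potential `ξ(x) = ∫_{x₀}^x M[a,v] s(v) dv`. -/
def xiF (μ σ : ℝ → ℝ) (x₀ a x : ℝ) : ℝ :=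
  ∫ v in x₀..x, Mab μ σ x₀ a v * sDen μ σ x₀ v

/-- The running reward potential `g(x) = ∫_{x₀}^x (∫_a^v c(u) m(u) du) s(v) dv`. -/
def gF (μ σ c : ℝ → ℝ) (x₀ a x : ℝ) : ℝ :=
  ∫ v in x₀..x, (∫ u in Set.Ioo a v, c u * mDen μ σ x₀ u) * sDen μ σ x₀ v

/-- `h(x) = (∫_a^x (γ c(u) + p μ(u)) m(u) du) / M[a,x]`. -/
def hF (μ σ c : ℝ → ℝ) (x₀ a p γ x : ℝ) : ℝ :=
  (∫ u in Set.Ioo a x, (γ * c u + p * μ u) * mDen μ σ x₀ u) / Mab μ σ x₀ a x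

/-- The long-term average reward `F(w,y)` of the `(w,y)`-impulse policy. -/
def FF (μ σ c : ℝ → ℝ) (x₀ a p K γ w y : ℝ) : ℝ :=
  (p * (y - w) - K + γ * (gF μ σ c x₀ a y - gF μ σ c x₀ a w)) /
    (xiF μ σ x₀ a y - xiF μ σ x₀ a w)

/-- `c̄(b)`: equals `⟨c,π⟩` when `M[a,b] < ∞` and the boundary value `c(b)` otherwise. -/
def cbar (μ σ c : ℝ → ℝ) (x₀ a : ℝ) (b : EReal) (cb : ℝ) : ℝ :=
  if MeasureTheory.IntegrableOn (mDen μ σ x₀) (stInt a b) MeasureTheory.volume then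
    (∫ u in stInt a b, c u * mDen μ σ x₀ u) / (∫ u in stInt a b, mDen μ σ x₀ u)
  else cb

/-!
For `ψ` with `ψ m` integrable at `a`, put `P_ψ(x) = ∫_{x₀}^x s(v) ∫_a^v ψ m`, so that `ξ = P_1` and
`g = P_c`. Then `P_ψ' = s ∫_a^x ψ m`, and since `s' = -(2μ/σ²) s` and `m s = 2/σ²`, differentiating
once more gives `(σ²/2) P_ψ'' + μ P_ψ' = ψ`. By linearity `G = F* ξ - γ g` solves
`(σ²/2) G'' + μ G' = F* - γ c`, which is (i). Since `ξ' = M[a,·] s > 0`, `ξ` is strictly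
increasing, and clearing the positive denominator `ξ(y) - ξ(w)` turns `F(w,y) ≤ F*` into (ii)
and `F(w*,y*) = F*` into (iii).
-/

theorem isOpen_stInt (a : ℝ) (b : EReal) : IsOpen (stInt a b) := by
  have h : stInt a b = ((↑) : ℝ → EReal) ⁻¹' Ioo (a : EReal) b := by
    ext x
    simp [stInt]
  exact h ▸ isOpen_Ioo.preimage continuous_coe_real_ereal

instance ordConnected_stInt (a : ℝ) (b : EReal) : OrdConnected (stInt a b) :=
  ⟨fun _ hx _ hy _ hz => ⟨hx.1.trans_le hz.1, (EReal.coe_le_coe_iff.2 hz.2).trans_lt hy.2⟩⟩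

theorem Ioc_subset_stInt {a x : ℝ} {b : EReal} (hx : x ∈ stInt a b) : Ioc a x ⊆ stInt a b :=
  fun _ hu => ⟨hu.1, (EReal.coe_le_coe_iff.2 hu.2).trans_lt hx.2⟩

theorem mem_stInt_of_lt {a w y : ℝ} {b : EReal} (haw : a < w) (hwy : w < y)
    (hyb : (y : EReal) < b) : w ∈ stInt a b ∧ y ∈ stInt a b :=
  ⟨⟨haw, (EReal.coe_lt_coe_iff.2 hwy).trans hyb⟩, ⟨haw.trans hwy, hyb⟩⟩

theorem ContinuousOn.hasDerivAt_intervalIntegral {f : ℝ → ℝ} {s : Set ℝ} [OrdConnected s]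
    (hs : IsOpen s) (hf : ContinuousOn f s) {x₀ x : ℝ} (hx₀ : x₀ ∈ s) (hx : x ∈ s) :
    HasDerivAt (fun u => ∫ y in x₀..u, f y) (f x) x :=
  intervalIntegral.integral_hasDerivAt_right
    (hf.mono (OrdConnected.uIcc_subset ‹_› hx₀ hx)).intervalIntegrable
    (hf.stronglyMeasurableAtFilter hs x hx) (hf.continuousAt (hs.mem_nhds hx))

theorem hasDerivAt_setIntegral_Ioo {φ : ℝ → ℝ} {a x : ℝ} (hax : a < x)
    (hint : IntegrableOn φ (Ioo a x)) (hmeas : StronglyMeasurableAtFilter φ (𝓝 x))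
    (hcont : ContinuousAt φ x) :
    HasDerivAt (fun y => ∫ u in Ioo a y, φ u) (φ x) x := by
  have hI : IntervalIntegrable φ volume a x :=
    (intervalIntegrable_iff_integrableOn_Ioo_of_le hax.le).2 hint
  refine (intervalIntegral.integral_hasDerivAt_right hI hmeas hcont).congr_of_eventuallyEq ?_
  filter_upwards [Ioi_mem_nhds hax] with y hy
  rw [intervalIntegral.integral_of_le (le_of_lt hy), integral_Ioc_eq_integral_Ioo]

theorem setIntegral_Ioo_pos {f : ℝ → ℝ} {a x : ℝ} (hax : a < x)
    (hf : IntegrableOn f (Ioo a x)) (hpos : ∀ u ∈ Ioo a x, 0 < f u) : 0 < ∫ u in Ioo a x, f u := by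
  have h := intervalIntegral.intervalIntegral_pos_of_pos_on
    ((intervalIntegrable_iff_integrableOn_Ioo_of_le hax.le).2 hf) hpos hax
  rwa [intervalIntegral.integral_of_le hax.le, integral_Ioc_eq_integral_Ioo] at h

theorem IntegrableOn.mul_of_monotoneOn {f c : ℝ → ℝ} {a x : ℝ}
    (hf : IntegrableOn f (Ioo a x)) (hc : ContinuousOn c (Ioc a x)) (hc0 : ∀ u ∈ Ioc a x, 0 ≤ c u)
    (hcmono : MonotoneOn c (Ioc a x)) :
    IntegrableOn (fun u => c u * f u) (Ioo a x) := by
  refine Integrable.bdd_mul (c := c x) hf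
    ((hc.mono Ioo_subset_Ioc_self).aestronglyMeasurable measurableSet_Ioo) ?_
  rw [ae_restrict_iff' measurableSet_Ioo]
  refine ae_of_all _ fun u hu => ?_
  have hu' := Ioo_subset_Ioc_self hu
  rw [Real.norm_eq_abs, abs_of_nonneg (hc0 u hu')]
  exact hcmono hu' (right_mem_Ioc.2 (hu.1.trans hu.2)) hu.2.le

theorem contDiffOn_two_of_hasDerivAt {f f' f'' : ℝ → ℝ} {s : Set ℝ} (hs : IsOpen s)
    (hf : ∀ x ∈ s, HasDerivAt f (f' x) x) (hf' : ∀ x ∈ s, HasDerivAt f' (f'' x) x)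
    (hf'' : ContinuousOn f'' s) : ContDiffOn ℝ 2 f s := by
  have h1 : ContDiffOn ℝ 1 f' s := by
    rw [show (1 : WithTop ℕ∞) = 0 + 1 by norm_num, contDiffOn_succ_iff_deriv_of_isOpen hs]
    exact ⟨fun x hx => (hf' x hx).differentiableAt.differentiableWithinAt, by simp,
      contDiffOn_zero.2 (hf''.congr fun x hx => (hf' x hx).deriv)⟩
  rw [show (2 : WithTop ℕ∞) = 1 + 1 by norm_num, contDiffOn_succ_iff_deriv_of_isOpen hs]
  exact ⟨fun x hx => (hf x hx).differentiableAt.differentiableWithinAt, by simp,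
    h1.congr fun x hx => (hf x hx).deriv⟩

theorem deriv_deriv_eq_of_hasDerivAt {f f' f'' : ℝ → ℝ} {s : Set ℝ} (hs : IsOpen s)
    (hf : ∀ x ∈ s, HasDerivAt f (f' x) x) (hf' : ∀ x ∈ s, HasDerivAt f' (f'' x) x) {x : ℝ}
    (hx : x ∈ s) : deriv (deriv f) x = f'' x := by
  have h : deriv f =ᶠ[𝓝 x] f' :=
    eventually_of_mem (hs.mem_nhds hx) fun y hy => (hf y hy).deriv
  rw [h.deriv_eq, (hf' x hx).deriv]

def speedPotentialDeriv (μ σ ψ : ℝ → ℝ) (x₀ a x : ℝ) : ℝ :=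
  (∫ u in Ioo a x, ψ u * mDen μ σ x₀ u) * sDen μ σ x₀ x

def speedPotential (μ σ ψ : ℝ → ℝ) (x₀ a x : ℝ) : ℝ :=
  ∫ v in x₀..x, speedPotentialDeriv μ σ ψ x₀ a v

section Diffusion

variable {μ σ ψ : ℝ → ℝ} {x₀ a x : ℝ} {b : EReal}

theorem xiF_eq_speedPotential (μ σ : ℝ → ℝ) (x₀ a : ℝ) :
    xiF μ σ x₀ a = speedPotential μ σ (fun _ => 1) x₀ a := by
  funext x
  simp [xiF, speedPotential, speedPotentialDeriv, Mab]

theorem gF_eq_speedPotential (μ σ c : ℝ → ℝ) (x₀ a : ℝ) :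
    gF μ σ c x₀ a = speedPotential μ σ c x₀ a :=
  rfl

theorem sDen_pos (μ σ : ℝ → ℝ) (x₀ x : ℝ) : 0 < sDen μ σ x₀ x :=
  Real.exp_pos _

theorem mDen_pos (hσx : σ x ≠ 0) : 0 < mDen μ σ x₀ x :=
  div_pos two_pos (mul_pos (sq_pos_of_ne_zero hσx) (sDen_pos μ σ x₀ x))

theorem hasDerivAt_sDen (hx₀ : x₀ ∈ stInt a b)
    (hr : ContinuousOn (fun y => 2 * μ y / σ y ^ 2) (stInt a b)) (hx : x ∈ stInt a b) :
    HasDerivAt (sDen μ σ x₀) (-(2 * μ x / σ x ^ 2) * sDen μ σ x₀ x) x := by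
  rw [mul_comm]
  exact (hr.hasDerivAt_intervalIntegral (isOpen_stInt a b) hx₀ hx).neg.exp

theorem continuousOn_mDen (hx₀ : x₀ ∈ stInt a b)
    (hr : ContinuousOn (fun y => 2 * μ y / σ y ^ 2) (stInt a b))
    (hσ : ContinuousOn σ (stInt a b)) (hσ0 : ∀ x ∈ stInt a b, σ x ≠ 0) :
    ContinuousOn (mDen μ σ x₀) (stInt a b) :=
  continuousOn_const.div ((hσ.pow 2).mul fun _ hx =>
      (hasDerivAt_sDen hx₀ hr hx).continuousAt.continuousWithinAt)
    fun x hx => (mul_pos (sq_pos_of_ne_zero (hσ0 x hx)) (sDen_pos μ σ x₀ x)).ne'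

/-- Rearranged: the speed potential `P` solves `(σ²/2) P'' + μ P' = ψ`. -/
theorem hasDerivAt_speedPotentialDeriv (hx₀ : x₀ ∈ stInt a b)
    (hr : ContinuousOn (fun y => 2 * μ y / σ y ^ 2) (stInt a b))
    (hψ : ContinuousOn (fun u => ψ u * mDen μ σ x₀ u) (stInt a b))
    (hint : IntegrableOn (fun u => ψ u * mDen μ σ x₀ u) (Ioo a x)) (hσx : σ x ≠ 0)
    (hx : x ∈ stInt a b) :
    HasDerivAt (speedPotentialDeriv μ σ ψ x₀ a)
      (2 / σ x ^ 2 * (ψ x - μ x * speedPotentialDeriv μ σ ψ x₀ a x)) x := by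
  have hS := isOpen_stInt a b
  have hI := hasDerivAt_setIntegral_Ioo hx.1 hint (hψ.stronglyMeasurableAtFilter hS x hx)
    (hψ.continuousAt (hS.mem_nhds hx))
  refine (hI.mul (hasDerivAt_sDen hx₀ hr hx)).congr_deriv ?_
  have hs := (sDen_pos μ σ x₀ x).ne'
  simp only [speedPotentialDeriv, mDen]
  field_simp
  ring

theorem hasDerivAt_speedPotential (hx₀ : x₀ ∈ stInt a b)
    (hr : ContinuousOn (fun y => 2 * μ y / σ y ^ 2) (stInt a b))
    (hψ : ContinuousOn (fun u => ψ u * mDen μ σ x₀ u) (stInt a b))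
    (hint : ∀ x ∈ stInt a b, IntegrableOn (fun u => ψ u * mDen μ σ x₀ u) (Ioo a x))
    (hσ0 : ∀ x ∈ stInt a b, σ x ≠ 0) (hx : x ∈ stInt a b) :
    HasDerivAt (speedPotential μ σ ψ x₀ a) (speedPotentialDeriv μ σ ψ x₀ a x) x :=
  ContinuousOn.hasDerivAt_intervalIntegral (isOpen_stInt a b)
    (fun y hy => (hasDerivAt_speedPotentialDeriv hx₀ hr hψ (hint y hy) (hσ0 y hy)
      hy).continuousAt.continuousWithinAt) hx₀ hx

theorem strictMonoOn_speedPotential (hx₀ : x₀ ∈ stInt a b)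
    (hr : ContinuousOn (fun y => 2 * μ y / σ y ^ 2) (stInt a b))
    (hψ : ContinuousOn (fun u => ψ u * mDen μ σ x₀ u) (stInt a b))
    (hint : ∀ x ∈ stInt a b, IntegrableOn (fun u => ψ u * mDen μ σ x₀ u) (Ioo a x))
    (hσ0 : ∀ x ∈ stInt a b, σ x ≠ 0) (hψpos : ∀ x ∈ stInt a b, 0 < ψ x) :
    StrictMonoOn (speedPotential μ σ ψ x₀ a) (stInt a b) := by
  have hP := fun x (hx : x ∈ stInt a b) => hasDerivAt_speedPotential hx₀ hr hψ hint hσ0 hx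
  refine strictMonoOn_of_deriv_pos (ordConnected_stInt a b).convex
    (fun x hx => (hP x hx).continuousAt.continuousWithinAt) fun x hx => ?_
  rw [(isOpen_stInt a b).interior_eq] at hx
  rw [(hP x hx).deriv]
  refine mul_pos (setIntegral_Ioo_pos hx.1 (hint x hx) fun u hu => ?_) (sDen_pos μ σ x₀ x)
  have hu := Ioo_subset_Ioc_self.trans (Ioc_subset_stInt hx) hu
  exact mul_pos (hψpos u hu) (mDen_pos (hσ0 u hu))

theorem strictMonoOn_xiF (hx₀ : x₀ ∈ stInt a b)
    (hr : ContinuousOn (fun y => 2 * μ y / σ y ^ 2) (stInt a b))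
    (hσ : ContinuousOn σ (stInt a b)) (hσ0 : ∀ x ∈ stInt a b, σ x ≠ 0)
    (hM : ∀ x ∈ stInt a b, IntegrableOn (mDen μ σ x₀) (Ioo a x)) :
    StrictMonoOn (xiF μ σ x₀ a) (stInt a b) := by
  have hm := continuousOn_mDen hx₀ hr hσ hσ0
  rw [xiF_eq_speedPotential]
  exact strictMonoOn_speedPotential hx₀ hr (continuousOn_const.mul hm) (by simpa using hM) hσ0
    fun _ _ => one_pos

theorem exists_hasDerivAt_xiF_sub_gF {c G : ℝ → ℝ} {F γ : ℝ} (hx₀ : x₀ ∈ stInt a b)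
    (hr : ContinuousOn (fun y => 2 * μ y / σ y ^ 2) (stInt a b))
    (hσ : ContinuousOn σ (stInt a b)) (hσ0 : ∀ x ∈ stInt a b, σ x ≠ 0)
    (hM : ∀ x ∈ stInt a b, IntegrableOn (mDen μ σ x₀) (Ioo a x))
    (hc : ContinuousOn c (stInt a b))
    (hcM : ∀ x ∈ stInt a b, IntegrableOn (fun u => c u * mDen μ σ x₀ u) (Ioo a x))
    (hG : ∀ x, G x = F * xiF μ σ x₀ a x - γ * gF μ σ c x₀ a x) :
    ∃ G' : ℝ → ℝ, (∀ x ∈ stInt a b, HasDerivAt G (G' x) x) ∧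
      ∀ x ∈ stInt a b, HasDerivAt G' (2 / σ x ^ 2 * (F - γ * c x - μ x * G' x)) x := by
  have hm := continuousOn_mDen hx₀ hr hσ hσ0
  have hm1 : ContinuousOn (fun u => 1 * mDen μ σ x₀ u) (stInt a b) := continuousOn_const.mul hm
  have hM1 : ∀ x ∈ stInt a b, IntegrableOn (fun u => 1 * mDen μ σ x₀ u) (Ioo a x) := by
    simpa using hM
  have hcm := hc.mul hm
  refine ⟨fun x => F * speedPotentialDeriv μ σ (fun _ => 1) x₀ a x
    - γ * speedPotentialDeriv μ σ c x₀ a x, fun x hx => ?_, fun x hx => ?_⟩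
  · rw [funext hG, xiF_eq_speedPotential, gF_eq_speedPotential]
    exact ((hasDerivAt_speedPotential hx₀ hr hm1 hM1 hσ0 hx).const_mul F).sub
      ((hasDerivAt_speedPotential hx₀ hr hcm hcM hσ0 hx).const_mul γ)
  · have h1 := hasDerivAt_speedPotentialDeriv hx₀ hr hm1 (hM1 x hx) (hσ0 x hx) hx
    have hc := hasDerivAt_speedPotentialDeriv hx₀ hr hcm (hcM x hx) (hσ0 x hx) hx
    exact ((h1.const_mul F).sub (hc.const_mul γ)).congr_deriv (by ring)

theorem FF_le_iff {c : ℝ → ℝ} {p K γ w y F : ℝ}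
    (h : xiF μ σ x₀ a w < xiF μ σ x₀ a y) :
    FF μ σ c x₀ a p K γ w y ≤ F ↔
      F * xiF μ σ x₀ a w - γ * gF μ σ c x₀ a w + p * (y - w) - K
        - (F * xiF μ σ x₀ a y - γ * gF μ σ c x₀ a y) ≤ 0 := by
  rw [FF, div_le_iff₀ (sub_pos.2 h)]
  constructor <;> intro <;> linarith

theorem FF_eq_iff {c : ℝ → ℝ} {p K γ w y F : ℝ}
    (h : xiF μ σ x₀ a w < xiF μ σ x₀ a y) :
    FF μ σ c x₀ a p K γ w y = F ↔
      F * xiF μ σ x₀ a w - γ * gF μ σ c x₀ a w + p * (y - w) - K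
        - (F * xiF μ σ x₀ a y - γ * gF μ σ c x₀ a y) = 0 := by
  rw [FF, div_eq_iff (sub_pos.2 h).ne']
  constructor <;> intro <;> linarith

end Diffusion

theorem statement15_general    (a : ℝ) (b : EReal)
    (μ σ : ℝ → ℝ) (x₀ : ℝ) (hx₀ : x₀ ∈ stInt a b)
    (hμcont : ContinuousOn μ (stInt a b)) (hσcont : ContinuousOn σ (stInt a b))
    (hσpos : ∀ x ∈ stInt a b, 0 < (σ x) ^ 2)
    (hMfin : ∀ x ∈ stInt a b, IntegrableOn (mDen μ σ x₀) (Set.Ioo a x))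
    (c : ℝ → ℝ) (hccont : ContinuousOn c (stInt a b))
    (hcnn : ∀ x ∈ stInt a b, 0 ≤ c x) (hcmono : MonotoneOn c (stInt a b))
    (p K γ : ℝ)
    (wstar ystar : ℝ) (hws : a < wstar) (hwy : wstar < ystar) (hys : (ystar : EReal) < b)
    (hmax : ∀ w y : ℝ, a < w → w < y → (y : EReal) < b →
      FF μ σ c x₀ a p K γ w y ≤ FF μ σ c x₀ a p K γ wstar ystar)
    (Fstar : ℝ) (hFstar : Fstar = FF μ σ c x₀ a p K γ wstar ystar)
    (G : ℝ → ℝ) (hG : ∀ x, G x = Fstar * xiF μ σ x₀ a x - γ * gF μ σ c x₀ a x) :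
    ContDiffOn ℝ 2 G (stInt a b) ∧
    (∀ x ∈ stInt a b,
      (σ x) ^ 2 / 2 * deriv (deriv G) x + μ x * deriv G x + γ * c x - Fstar = 0) ∧
    (∀ w y : ℝ, a < w → w < y → (y : EReal) < b →
      G w + p * (y - w) - K - G y ≤ 0) ∧
    G wstar + p * (ystar - wstar) - K - G ystar = 0 := by
  have hS := isOpen_stInt a b
  have hσ0 : ∀ x ∈ stInt a b, σ x ≠ 0 := fun x hx => by simpa using (hσpos x hx).ne'
  have hr : ContinuousOn (fun y => 2 * μ y / σ y ^ 2) (stInt a b) :=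
    (continuousOn_const.mul hμcont).div (hσcont.pow 2) fun x hx => (hσpos x hx).ne'
  have hintc : ∀ x ∈ stInt a b, IntegrableOn (fun u => c u * mDen μ σ x₀ u) (Ioo a x) :=
    fun x hx => IntegrableOn.mul_of_monotoneOn (hMfin x hx) (hccont.mono (Ioc_subset_stInt hx))
      (fun u hu => hcnn u (Ioc_subset_stInt hx hu)) (hcmono.mono (Ioc_subset_stInt hx))
  obtain ⟨G', hG', hG''⟩ := exists_hasDerivAt_xiF_sub_gF hx₀ hr hσcont hσ0 hMfin hccont hintc hG
  have hG''cont : ContinuousOn (fun x => 2 / σ x ^ 2 * (Fstar - γ * c x - μ x * G' x))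
      (stInt a b) := by
    have hG'cont : ContinuousOn G' (stInt a b) := fun x hx =>
      (hG'' x hx).continuousAt.continuousWithinAt
    have hσ2 : ∀ x ∈ stInt a b, σ x ^ 2 ≠ 0 := fun x hx => (hσpos x hx).ne'
    fun_prop (disch := assumption)
  have hξ := strictMonoOn_xiF hx₀ hr hσcont hσ0 hMfin
  refine ⟨contDiffOn_two_of_hasDerivAt hS hG' hG'' hG''cont, fun x hx => ?_,
    fun w y haw hwy hyb => ?_, ?_⟩
  · rw [deriv_deriv_eq_of_hasDerivAt hS hG' hG'' hx, (hG' x hx).deriv]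
    field_simp [hσ0 x hx]
    ring
  · obtain ⟨hw, hy⟩ := mem_stInt_of_lt haw hwy hyb
    rw [hG, hG]
    exact (FF_le_iff (hξ hw hy hwy)).1 (hFstar ▸ hmax w y haw hwy hyb)
  · obtain ⟨hw, hy⟩ := mem_stInt_of_lt hws hwy hys
    rw [hG, hG]
    exact (FF_eq_iff (hξ hw hy hwy)).1 hFstar.symm

theorem statement15    (a : ℝ) (b : EReal) (hab : (a : EReal) < b)
    (μ σ : ℝ → ℝ) (x₀ : ℝ) (hx₀ : x₀ ∈ stInt a b)
    (hμcont : ContinuousOn μ (stInt a b)) (hσcont : ContinuousOn σ (stInt a b))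
    (hσpos : ∀ x ∈ stInt a b, 0 < (σ x) ^ 2)
    (hMfin : ∀ x ∈ stInt a b, IntegrableOn (mDen μ σ x₀) (Set.Ioo a x))
    (hsa : Tendsto (sDen μ σ x₀) (𝓝[>] a) atTop)
    (c : ℝ → ℝ) (hccont : ContinuousOn c (stInt a b))
    (hcnn : ∀ x ∈ stInt a b, 0 ≤ c x) (hcmono : MonotoneOn c (stInt a b))
    (ca cb : ℝ) (hca : Tendsto c (𝓝[>] a) (𝓝 ca)) (hcb : Tendsto c (atB b) (𝓝 cb))
    (hca0 : 0 ≤ ca) (hcacb : ca < cb)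
    (p K γ : ℝ) (hp : 0 < p) (hK : 0 < K) (hγ : 0 < γ)
    (wstar ystar : ℝ) (hws : a < wstar) (hwy : wstar < ystar) (hys : (ystar : EReal) < b)
    (hmax : ∀ w y : ℝ, a < w → w < y → (y : EReal) < b →
      FF μ σ c x₀ a p K γ w y ≤ FF μ σ c x₀ a p K γ wstar ystar)
    (Fstar : ℝ) (hFstar : Fstar = FF μ σ c x₀ a p K γ wstar ystar)
    (G : ℝ → ℝ) (hG : ∀ x, G x = Fstar * xiF μ σ x₀ a x - γ * gF μ σ c x₀ a x) :
    ContDiffOn ℝ 2 G (stInt a b) ∧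
    (∀ x ∈ stInt a b,
      (σ x) ^ 2 / 2 * deriv (deriv G) x + μ x * deriv G x + γ * c x - Fstar = 0) ∧
    (∀ w y : ℝ, a < w → w < y → (y : EReal) < b →
      G w + p * (y - w) - K - G y ≤ 0) ∧
    G wstar + p * (ystar - wstar) - K - G ystar = 0 :=
  statement15_general a b μ σ x₀ hx₀ hμcont hσcont hσpos hMfin c hccont hcnn hcmono p K γ wstar
    ystar hws hwy hys hmax Fstar hFstar G hG
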